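/- Let 1 < p < ∞, let X be a real Banach space, and let X₁ ⊆ X₂ ⊆ X₃ ⊆ ⋯ be finite-dimensional linear subspaces of X. For 0 < s < 1 and a positive integer m define V_s^{(m)} = { ∑_{k=m}^∞ α_k a_k/‖a_k‖^s : for each k ≥ m, a_k ∈ X_k with ‖a_k‖ ≤ (1/2)^{k−1} (with the convention that the k-th summand is 0 when a_k = 0), and ∑_{k=m}^∞ |α_k|^p ≤ 1 }, and let V_r = V_r^{(1)}. Then for all 0 < s < r < 1 and every m ≥ 1, V_s^{(m)} ⊆ (1/2)^{(m−1)(r−s)} · V_r; in particular, the Minkowski functional of V_r is at most (1/2)^{(m−1)(r−s)} on V_s^{(m)}. -/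

import Mathlib

open scoped Pointwise

variable (X : Type*) [NormedAddCommGroup X] [NormedSpace ℝ X]

/-- The set `V_s^{(m)}` of sums `∑_{k ≥ m} α k • (a k / ‖a k‖ ^ s)` with `a k ∈ Xs k`,
`‖a k‖ ≤ (1/2) ^ k` and `∑ |α k| ^ p ≤ 1` (indices `k = 0, 1, 2, …` corresponding to
`k−1` for `k ≥ 1` in the classical notation, so `m` here corresponds to `m−1 ≥ 0`). -/
def VsetFrom (Xs : ℕ → Submodule ℝ X) (p s : ℝ) (m : ℕ) : Set X :=
  {v | ∃ (α : ℕ → ℝ) (a : ℕ → X),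
    (∀ k, a k ∈ Xs k ∧ ‖a k‖ ≤ (1 / 2 : ℝ) ^ k) ∧ (∀ k < m, α k = 0) ∧
    (Summable fun k => |α k| ^ p) ∧ (∑' k, |α k| ^ p) ≤ 1 ∧
    HasSum (fun k => (α k * (‖a k‖ ^ s)⁻¹) • a k) v}

/-- For `0 < s < r < 1` and every `m`, `V_s^{(m)} ⊆ (1/2) ^ (m * (r - s)) • V_r`; in
particular the Minkowski functional of `V_r` is at most `(1/2) ^ (m * (r - s))` on
`V_s^{(m)}` (with the indices shifted down by one, so that the factor `(1/2)^{(m-1)(r-s)}`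
of the classical statement reads `(1/2)^{m(r-s)}` here). -/
theorem stmt_13 [CompleteSpace X]
    (p : ℝ) (hp : 1 < p)
    (Xs : ℕ → Submodule ℝ X) (hfin : ∀ k, FiniteDimensional ℝ (Xs k))
    (hmono : Monotone Xs) (s r : ℝ) (hs : 0 < s) (hsr : s < r) (hr : r < 1) (m : ℕ) :
    VsetFrom X Xs p s m ⊆ ((1 / 2 : ℝ) ^ ((m : ℝ) * (r - s))) • VsetFrom X Xs p r 0 ∧
    ∀ x ∈ VsetFrom X Xs p s m,
      gauge (VsetFrom X Xs p r 0) x ≤ (1 / 2 : ℝ) ^ ((m : ℝ) * (r - s)) := by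
  set c : ℝ := (1 / 2 : ℝ) ^ ((m : ℝ) * (r - s)) with hcdef
  have hc0 : 0 < c := Real.rpow_pos_of_pos (by norm_num) _
  have hsub : VsetFrom X Xs p s m ⊆ c • VsetFrom X Xs p r 0 := by
    rintro v ⟨α, a, ha, hα0, hsum, htsum, hhas⟩
    rw [Set.mem_smul_set_iff_inv_smul_mem₀ hc0.ne']
    set β : ℕ → ℝ := fun k => α k * ‖a k‖ ^ (r - s) * c⁻¹ with hβdef
    have hβle : ∀ k, |β k| ≤ |α k| := by
      intro k
      rcases lt_or_ge k m with hk | hk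
      · simp [hβdef, hα0 k hk]
      · have h1 : ‖a k‖ ^ (r - s) ≤ c := by
          have h2 : ‖a k‖ ^ (r - s) ≤ ((1 / 2 : ℝ) ^ m) ^ (r - s) := by
            apply Real.rpow_le_rpow (norm_nonneg _)
              ((ha k).2.trans (pow_le_pow_of_le_one (by norm_num) (by norm_num) hk))
              (by linarith)
          calc ‖a k‖ ^ (r - s) ≤ ((1 / 2 : ℝ) ^ m) ^ (r - s) := h2
            _ = c := by
              rw [hcdef, ← Real.rpow_natCast (1/2 : ℝ) m,
                ← Real.rpow_mul (by norm_num)]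
        have : |β k| = |α k| * ‖a k‖ ^ (r - s) * c⁻¹ := by
          rw [hβdef]
          simp [abs_mul, abs_of_nonneg (Real.rpow_nonneg (norm_nonneg _) _),
            abs_of_nonneg (inv_nonneg.mpr hc0.le)]
        rw [this]
        calc |α k| * ‖a k‖ ^ (r - s) * c⁻¹ ≤ |α k| * c * c⁻¹ := by
              gcongr
          _ = |α k| := by field_simp
    have hβp : ∀ k, |β k| ^ p ≤ |α k| ^ p := fun k =>
      Real.rpow_le_rpow (abs_nonneg _) (hβle k) (by linarith)
    have hβsum : Summable fun k => |β k| ^ p :=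
      Summable.of_nonneg_of_le (fun k => Real.rpow_nonneg (abs_nonneg _) _) hβp hsum
    have hkey : ∀ k, (β k * (‖a k‖ ^ r)⁻¹) • a k
        = c⁻¹ • ((α k * (‖a k‖ ^ s)⁻¹) • a k) := by
      intro k
      by_cases h : a k = 0
      · simp [h]
      · have hn : (0 : ℝ) < ‖a k‖ := norm_pos_iff.mpr h
        rw [smul_smul]
        congr 1
        have hr0 : ‖a k‖ ^ r ≠ 0 := (Real.rpow_pos_of_pos hn r).ne'
        have hs0 : ‖a k‖ ^ s ≠ 0 := (Real.rpow_pos_of_pos hn s).ne'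
        simp only [hβdef, Real.rpow_sub hn]
        field_simp
      
    refine ⟨β, a, ha, fun k hk => absurd hk (Nat.not_lt_zero k), hβsum,
      le_trans (Summable.tsum_le_tsum hβp hβsum hsum) htsum, ?_⟩
    have := hhas.const_smul c⁻¹
    simpa [hkey] using this
  exact ⟨hsub, fun x hx => gauge_le_of_mem hc0.le (hsub hx)⟩
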